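/- arXiv:0802.1990 — 4 statements merged into one kernel-verified Lean document; each statement's English description precedes it below -/
import Mathlib

section
/- Let A be a commutative ring, B a commutative A-algebra, and B_n = B ⊗_A ⋯ ⊗_A B the (n+1)-fold tensor power, with factors indexed 0 through n. For 0 ≤ i < j ≤ n, let I_{ij} be the kernel of the A-algebra map B_n → B_{n−1} that multiplies the i-th and j-th tensor factors together (placing the product in position min(i,j) and deleting position j). Then for all 0 ≤ i < j < ℓ ≤ n, I_{iℓ} ⊆ I_{ij} + I_{jℓ}. -/
open scoped TensorProduct
open PiTensorProduct

variable (A B : Type) [CommRing A] [CommRing B] [Algebra A B]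

abbrev Bpow (n : ℕ) : Type := ⨂[A] (_ : Fin n), B

noncomputable def rmap {m n : ℕ} (r : Fin m → Fin n) : Bpow A B m →ₐ[A] Bpow A B n :=
  PiTensorProduct.liftAlgHom
    ((MultilinearMap.mkPiAlgebra A (Fin m) (Bpow A B n)).compLinearMap
      (fun k => (PiTensorProduct.singleAlgHom (R := A) (A := fun _ : Fin n => B) (r k)).toLinearMap))
    (by simp [← PiTensorProduct.one_def])
    (by intro x y
        simp only [MultilinearMap.compLinearMap_apply, MultilinearMap.mkPiAlgebra_apply,
          Pi.mul_apply, AlgHom.toLinearMap_apply, _root_.map_mul, Finset.prod_mul_distrib])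

noncomputable def mergeN (n i j : ℕ) (hij : i < j) (hj : j ≤ n) :
    Bpow A B (n+1) →ₐ[A] Bpow A B n :=
  rmap A B (fun k => if h1 : k.val < j then ⟨k.val, by omega⟩
    else if h2 : k.val = j then ⟨i, by omega⟩
    else ⟨k.val - 1, by have := k.isLt; omega⟩)

noncomputable def Iideal (n i j : ℕ) (hij : i < j) (hj : j ≤ n) : Ideal (Bpow A B (n+1)) :=
  RingHom.ker (mergeN A B n i j hij hj)

noncomputable def Kideal (n : ℕ) : Ideal (Bpow A B (n+1)) :=
  ⨆ (i : ℕ) (j : ℕ) (hij : i < j) (hj : j ≤ n), (Iideal A B n i j hij hj) ^ 2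

abbrev Cq (n : ℕ) : Type := Bpow A B (n+1) ⧸ Kideal A B n

noncomputable def Jt (n i j : ℕ) (hij : i < j) (hj : j ≤ n) : Ideal (Cq A B n) :=
  Ideal.map (Ideal.Quotient.mk (Kideal A B n)) (Iideal A B n i j hij hj)

noncomputable def dElt (n i j : ℕ) (hi : i ≤ n) (hj : j ≤ n) (y : B) : Bpow A B (n+1) :=
  PiTensorProduct.singleAlgHom (R := A) (A := fun _ : Fin (n+1) => B) ⟨j, by omega⟩ y
    - PiTensorProduct.singleAlgHom (R := A) (A := fun _ : Fin (n+1) => B) ⟨i, by omega⟩ y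

noncomputable def insN (n j : ℕ) (hj : j ≤ n+1) : Bpow A B (n+1) →ₐ[A] Bpow A B (n+2) :=
  rmap A B (fun k => if h : k.val < j then ⟨k.val, by omega⟩
    else ⟨k.val + 1, by have := k.isLt; omega⟩)

noncomputable def eN (n : ℕ) : Bpow A B (n+1) →ₗ[A] Bpow A B (n+2) :=
  ∑ j : Fin (n+2), ((-1 : ℤ) ^ (j : ℕ)) • (insN A B n j (by omega)).toLinearMap

noncomputable def smashG (m n N : ℕ) (h : N = m + n) (x : Bpow A B (m+1)) (y : Bpow A B (n+1)) :
    Bpow A B (N+1) :=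
  rmap A B (fun k : Fin (m+1) => (⟨k.val, by have := k.isLt; omega⟩ : Fin (N+1))) x *
  rmap A B (fun k : Fin (n+1) => (⟨m + k.val, by have := k.isLt; omega⟩ : Fin (N+1))) y


lemma rmap_single {m n : ℕ} (r : Fin m → Fin n) (k : Fin m) (y : B) :
    rmap A B r (PiTensorProduct.singleAlgHom (R := A) (A := fun _ : Fin m => B) k y)
      = PiTensorProduct.singleAlgHom (R := A) (A := fun _ : Fin n => B) (r k) y := by
  simp only [rmap, singleAlgHom_apply, liftAlgHom, AlgHom.ofLinearMap_apply, lift.tprod,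
    MultilinearMap.compLinearMap_apply, MultilinearMap.mkPiAlgebra_apply,
    AlgHom.toLinearMap_apply]
  rw [Fintype.prod_eq_single k]
  · simp
  · intro x hx
    simp [Pi.mulSingle_eq_of_ne hx, Pi.mulSingle_one, ← PiTensorProduct.one_def]

lemma hdiff (n a b : ℕ) (hab : a < b) (hb : b ≤ n) (y : B) :
    PiTensorProduct.singleAlgHom (R := A) (A := fun _ : Fin (n+1) => B) ⟨b, by omega⟩ y -
      PiTensorProduct.singleAlgHom (R := A) (A := fun _ : Fin (n+1) => B) ⟨a, by omega⟩ y
      ∈ Iideal A B n a b hab hb := by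
  show _ ∈ RingHom.ker _
  rw [RingHom.mem_ker, map_sub]
  rw [show mergeN A B n a b hab hb = rmap A B (fun k => if h1 : k.val < b then ⟨k.val, by omega⟩
    else if h2 : k.val = b then ⟨a, by omega⟩
    else ⟨k.val - 1, by have := k.isLt; omega⟩) from rfl, rmap_single, rmap_single]
  simp [hab]




/-- In the `(n+1)`-fold tensor power `B^{⊗(n+1)}` over `A`,
for `0 ≤ i < j < ℓ ≤ n` the merge-kernel ideals satisfy `I_{iℓ} ⊆ I_{ij} + I_{jℓ}`. -/
theorem statement3 (n i j l : ℕ) (hij : i < j) (hjl : j < l) (hl : l ≤ n) :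
    Iideal A B n i l (by omega) hl ≤
      Iideal A B n i j hij (by omega) + Iideal A B n j l hjl hl := by
  intro x hx
  set I : Ideal (Bpow A B (n+1)) := Iideal A B n i j hij (by omega) + Iideal A B n j l hjl hl
    with hI
  let q : Bpow A B (n+1) →ₐ[A] (Bpow A B (n+1) ⧸ I) := Ideal.Quotient.mkₐ A I
  have hsub : ∀ y : B,
      PiTensorProduct.singleAlgHom (R := A) (A := fun _ : Fin (n+1) => B) ⟨l, by omega⟩ y
      - PiTensorProduct.singleAlgHom (R := A) (A := fun _ : Fin (n+1) => B) ⟨i, by omega⟩ y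
      ∈ I := by
    intro y
    have h1 := hdiff A B n j l hjl hl y
    have h2 := hdiff A B n i j hij (by omega) y
    have e : PiTensorProduct.singleAlgHom (R := A) (A := fun _ : Fin (n+1) => B) ⟨l, by omega⟩ y
        - PiTensorProduct.singleAlgHom (R := A) (A := fun _ : Fin (n+1) => B) ⟨i, by omega⟩ y
        = (PiTensorProduct.singleAlgHom (R := A) (A := fun _ : Fin (n+1) => B) ⟨l, by omega⟩ y
          - PiTensorProduct.singleAlgHom (R := A) (A := fun _ : Fin (n+1) => B) ⟨j, by omega⟩ y)
        + (PiTensorProduct.singleAlgHom (R := A) (A := fun _ : Fin (n+1) => B) ⟨j, by omega⟩ y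
          - PiTensorProduct.singleAlgHom (R := A) (A := fun _ : Fin (n+1) => B) ⟨i, by omega⟩ y)
        := by ring
    rw [e]
    exact Submodule.add_mem _ (Submodule.mem_sup_right h1) (Submodule.mem_sup_left h2)
  have hqs : ∀ a b : Fin (n+1), (a.val = b.val ∨ (a.val = i ∧ b.val = l)) → ∀ y : B,
      q (PiTensorProduct.singleAlgHom (R := A) (A := fun _ : Fin (n+1) => B) a y)
        = q (PiTensorProduct.singleAlgHom (R := A) (A := fun _ : Fin (n+1) => B) b y) := by
    rintro a b (hab | ⟨hai, hbl⟩) y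
    · rw [Fin.ext hab]
    · rw [show a = ⟨i, by omega⟩ from Fin.ext hai, show b = ⟨l, by omega⟩ from Fin.ext hbl]
      show Ideal.Quotient.mk I _ = Ideal.Quotient.mk I _
      exact Ideal.Quotient.eq.mpr (by simpa using I.neg_mem (hsub y))
  have key : q.comp ((rmap A B (fun k : Fin n => if h : k.val < l then ⟨k.val, by omega⟩
      else ⟨k.val + 1, by have := k.isLt; omega⟩)).comp (mergeN A B n i l (by omega) hl)) = q := by
    apply PiTensorProduct.algHom_ext
    intro k
    ext y
    simp only [AlgHom.comp_apply, AlgHom.coe_comp, Function.comp_apply]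
    rw [show mergeN A B n i l (by omega) hl = rmap A B (fun k : Fin (n+1) =>
      if h1 : k.val < l then ⟨k.val, by omega⟩
      else if h2 : k.val = l then ⟨i, by omega⟩
      else ⟨k.val - 1, by have := k.isLt; omega⟩) from rfl, rmap_single, rmap_single]
    refine hqs _ _ ?_ y
    simp only [apply_dite (Fin.val)]
    split_ifs <;> simp_all <;> omega
  have hq := congrArg (fun f => f x) key
  simp only [AlgHom.comp_apply] at hq
  rw [show mergeN A B n i l (by omega) hl x = 0 from hx, map_zero, map_zero] at hq
  have h0 : Ideal.Quotient.mk I x = 0 := by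
    rw [show q x = Ideal.Quotient.mk I x from rfl] at hq; exact hq.symm
  exact Ideal.Quotient.eq_zero_iff_mem.mp h0
end

section
/- With B_n = B ⊗_A ⋯ ⊗_A B the (n+1)-fold tensor power and d^{i,j} y := π_j^*(y) − π_i^*(y) (difference of the j-th and i-th factor inclusions of y ∈ B), for all i < j and all y ∈ B one has d^{i,j} y = d^{0,j} y − d^{0,i} y, and for all y, y' ∈ B: (d^{i,j} y)(d^{i,j} y') + (d^{0,i} y)(d^{0,j} y') + (d^{0,i} y')(d^{0,j} y) lies in the ideal I_{0i}² + I_{0j}², where I_{kℓ} is the kernel of the map merging factors k and ℓ. -/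
open scoped TensorProduct
open PiTensorProduct

variable (A B : Type) [CommRing A] [CommRing B] [Algebra A B]

/-! Writing `a = d^{0,i}` and `b = d^{0,j}`, one has `d^{i,j} = b - a`, and then the ring identity
`(b y - a y)(b y' - a y') + a y · b y' + a y' · b y = a y · a y' + b y · b y'` reduces the second claim
to `d^{0,k} y ∈ I_{0k}`, which holds because merging factors `0` and `k` identifies `π_0^*` with `π_k^*`. -/

section

variable {A B}

lemma rmap_singleAlgHom {m n : ℕ} (r : Fin m → Fin n) (k : Fin m) (y : B) :
    rmap A B r (singleAlgHom (R := A) (A := fun _ : Fin m => B) k y)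
      = singleAlgHom (R := A) (A := fun _ : Fin n => B) (r k) y := by
  simp only [rmap, singleAlgHom_apply]
  erw [liftAlgHom_apply, lift.tprod]
  simp only [MultilinearMap.compLinearMap_apply, MultilinearMap.mkPiAlgebra_apply,
    AlgHom.toLinearMap_apply]
  rw [Finset.prod_eq_single k]
  · simp
  · intro l _ hl
    simp [MonoidHom.mulSingle_apply, hl, ← one_def]
  · simp

lemma sub_mul_sub_add_mul_add_mul {R : Type*} [CommRing R] (a b a' b' : R) :
    (b - a) * (b' - a') + a * b' + a' * b = a * a' + b * b' := by
  ring

lemma dElt_eq_sub {n i j : ℕ} (k : ℕ) (hi : i ≤ n) (hj : j ≤ n) (hk : k ≤ n) (y : B) :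
    dElt A B n i j hi hj y = dElt A B n k j hk hj y - dElt A B n k i hk hi y := by
  simp only [dElt]
  abel

lemma dElt_mem_Iideal {n i j : ℕ} (hij : i < j) (hj : j ≤ n) (y : B) :
    dElt A B n i j (hij.le.trans hj) hj y ∈ Iideal A B n i j hij hj := by
  change mergeN A B n i j hij hj _ = 0
  rw [dElt, map_sub, mergeN, rmap_singleAlgHom, rmap_singleAlgHom, sub_eq_zero]
  congr 1
  simp [hij]

lemma dElt_mul_dElt_mem_Iideal_sq {n i j : ℕ} (hij : i < j) (hj : j ≤ n) (y y' : B) :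
    dElt A B n i j (hij.le.trans hj) hj y * dElt A B n i j (hij.le.trans hj) hj y'
      ∈ Iideal A B n i j hij hj ^ 2 :=
  sq (Iideal A B n i j hij hj) ▸
    Ideal.mul_mem_mul (dElt_mem_Iideal hij hj y) (dElt_mem_Iideal hij hj y')

end

/-- With `d^{i,j} y := π_j^*(y) − π_i^*(y)` in `B^{⊗(n+1)}`, for
`0 < i < j ≤ n`: `d^{i,j} y = d^{0,j} y − d^{0,i} y`, and
`(d^{i,j}y)(d^{i,j}y') + (d^{0,i}y)(d^{0,j}y') + (d^{0,i}y')(d^{0,j}y) ∈ I_{0i}² + I_{0j}²`. -/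
theorem statement4 (n i j : ℕ) (hi : 0 < i) (hij : i < j) (hj : j ≤ n) (y y' : B) :
    dElt A B n i j (by omega) hj y =
      dElt A B n 0 j (by omega) hj y - dElt A B n 0 i (by omega) (by omega) y ∧
    dElt A B n i j (by omega) hj y * dElt A B n i j (by omega) hj y'
      + dElt A B n 0 i (by omega) (by omega) y * dElt A B n 0 j (by omega) hj y'
      + dElt A B n 0 i (by omega) (by omega) y' * dElt A B n 0 j (by omega) hj y
      ∈ (Iideal A B n 0 i hi (by omega)) ^ 2 + (Iideal A B n 0 j (by omega) hj) ^ 2 := by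
  have hd : ∀ z, dElt A B n i j (by omega) hj z
      = dElt A B n 0 j (by omega) hj z - dElt A B n 0 i (by omega) (by omega) z :=
    dElt_eq_sub 0 (by omega) hj (by omega)
  refine ⟨hd y, ?_⟩
  rw [hd, hd, sub_mul_sub_add_mul_add_mul]
  exact Submodule.add_mem_sup (dElt_mul_dElt_mem_Iideal_sq hi (by omega) y y')
    (dElt_mul_dElt_mem_Iideal_sq (by omega) hj y y')
end

section
/- Let A be a commutative ring with 2 invertible and B a commutative A-algebra, with C_n = B^{⊗(n+1)}/(∑_{i<j} I_{ij}²), identifying Λⁿ Ω¹_{B/A} with the ideal ∏_{j=1}^n J̃_{j−1,j} ⊆ C_n via Φ_n. Then the alternating sum e_n = ∑_{j=0}^{n+1} (−1)^j d_j of the unit-insertion maps induces, under these identifications, the exterior derivative d : Λⁿ Ω¹_{B/A} → Λ^{n+1} Ω¹_{B/A}; i.e., Ψ_{n+1}(e_n(x)) = d(Ψ_n(x)) for all x ∈ ⋂_{j=1}^n J̃_{j−1,j}. -/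
set_option maxHeartbeats 1000000
set_option synthInstance.maxHeartbeats 400000

open scoped TensorProduct
open PiTensorProduct

variable (A B : Type) [CommRing A] [CommRing B] [Algebra A B]

/-- The wedge `dy₁ ∧ ⋯ ∧ dyₙ`-style elements of the `n`-th exterior power. -/
noncomputable def wedgeD (n : ℕ) (f : Fin n → Ω[B⁄A]) : ⋀[B]^n (Ω[B⁄A]) :=
  ⟨ExteriorAlgebra.ιMulti B n f, ExteriorAlgebra.ιMulti_range B n (Set.mem_range_self f)⟩

/-- `B`-algebra structure on `C_n` through the 0-th tensor factor. -/
noncomputable instance instAlgebraBCq (n : ℕ) : Algebra B (Cq A B n) :=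
  ((Ideal.Quotient.mk (Kideal A B n)).comp
    (PiTensorProduct.singleAlgHom (R := A) (A := fun _ : Fin (n+1) => B) 0).toRingHom).toAlgebra

/-! On a generator `y₀ ⊗ ⋯ ⊗ yₙ`, the insertion `d₀` produces `1 ⊗ y₀ ⊗ ⋯ ⊗ yₙ`, which `Ψ_{n+1}`
sends to `dy₀ ∧ ⋯ ∧ dyₙ = d(y₀ dy₁ ∧ ⋯ ∧ dyₙ)`; for `j ≥ 1`, `d_j` puts a `1` in a slot that
`Ψ_{n+1}` differentiates, so its image contains the factor `d1 = 0`. Both sides are `A`-linear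
and `C_n` is spanned by such generators. -/

lemma rmap_tprod {m k : ℕ} (r : Fin m → Fin k) (y : Fin m → B) :
    rmap A B r (PiTensorProduct.tprod A y)
      = PiTensorProduct.tprod A (∏ i, Pi.mulSingle (M := fun _ : Fin k => B) (r i) (y i)) := by
  simp [rmap, liftAlgHom, ← tprod_prod]

lemma prod_mulSingle_succAbove {m : ℕ} (p : Fin (m+1)) (y : Fin m → B) :
    ∏ i, Pi.mulSingle (M := fun _ : Fin (m+1) => B) (p.succAbove i) (y i)
      = Fin.insertNth (α := fun _ => B) p 1 y := by
  conv_rhs =>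
    rw [← Finset.univ_prod_mulSingle (Fin.insertNth (α := fun _ => B) p 1 y),
      Fin.prod_univ_succAbove _ p]
  simp

lemma insN_eq_rmap_succAbove (n j : ℕ) (hj : j ≤ n+1) :
    insN A B n j hj = rmap A B (Fin.succAbove ⟨j, by omega⟩) := by
  unfold insN
  congr 1

lemma insN_tprod (n j : ℕ) (hj : j ≤ n+1) (y : Fin (n+1) → B) :
    insN A B n j hj (PiTensorProduct.tprod A y)
      = PiTensorProduct.tprod A (Fin.insertNth (α := fun _ => B) ⟨j, by omega⟩ 1 y) := by
  rw [insN_eq_rmap_succAbove, rmap_tprod, prod_mulSingle_succAbove]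

lemma wedgeD_eq_zero {m : ℕ} {f : Fin m → Ω[B⁄A]} (i : Fin m) (hf : f i = 0) :
    wedgeD A B m f = 0 :=
  Subtype.ext ((ExteriorAlgebra.ιMulti B m).map_coord_zero i hf)

lemma wedgeD_D_insertNth_succ {m : ℕ} (k : Fin (m+1)) (y : Fin (m+1) → B) :
    wedgeD A B (m+1)
      (fun i => KaehlerDifferential.D A B (Fin.insertNth (α := fun _ => B) k.succ 1 y i.succ)) = 0 :=
  wedgeD_eq_zero A B k (by simp)

lemma Cq.linearMap_ext {n : ℕ} {M : Type*} [AddCommGroup M] [Module A M]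
    {f g : Cq A B n →ₗ[A] M}
    (h : ∀ y, f (Ideal.Quotient.mk (Kideal A B n) (PiTensorProduct.tprod A y))
      = g (Ideal.Quotient.mk (Kideal A B n) (PiTensorProduct.tprod A y))) :
    f = g := by
  rw [← LinearMap.cancel_right (g := (Ideal.Quotient.mkₐ A (Kideal A B n)).toLinearMap)
    (Ideal.Quotient.mkₐ_surjective A _)]
  exact PiTensorProduct.ext (MultilinearMap.ext h)

/-- (2 invertible in `A`.)  Under the identification of `Λⁿ Ω¹_{B/A}`
with `⋂ⱼ J̃_{j−1,j} ⊆ Cₙ`, the alternating sum `eₙ = ∑ (−1)^j dⱼ` of the unit-insertion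
maps induces the exterior derivative: `Ψ_{n+1}(eₙ x) = d(Ψₙ x)` for `x ∈ ⋂ⱼ J̃_{j−1,j}`. -/
theorem statement17 (n : ℕ)
    (Ψ : Cq A B (n) →ₗ[A] ⋀[B]^(n) (Ω[B⁄A]))
    (hΨ : ∀ y : Fin (n+1) → B,
      Ψ (Ideal.Quotient.mk (Kideal A B (n)) (PiTensorProduct.tprod A y))
        = y 0 • wedgeD A B (n) (fun i => KaehlerDifferential.D A B (y i.succ)))
    (Ψ' : Cq A B (n+1) →ₗ[A] ⋀[B]^(n+1) (Ω[B⁄A]))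
    (hΨ' : ∀ y : Fin (n+1+1) → B,
      Ψ' (Ideal.Quotient.mk (Kideal A B (n+1)) (PiTensorProduct.tprod A y))
        = y 0 • wedgeD A B (n+1) (fun i => KaehlerDifferential.D A B (y i.succ)))
    (dbar : Fin (n+2) → (Cq A B n →ₗ[A] Cq A B (n+1)))
    (hdbar : ∀ (j : Fin (n+2)) (x : Bpow A B (n+1)),
      dbar j (Ideal.Quotient.mk (Kideal A B n) x)
        = Ideal.Quotient.mk (Kideal A B (n+1))
            (insN A B n j.val (by have := j.isLt; omega) x))
    (dR : (⋀[B]^n (Ω[B⁄A])) →ₗ[A] ⋀[B]^(n+1) (Ω[B⁄A]))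
    (hdR : ∀ y : Fin (n+1) → B,
      dR (y 0 • wedgeD A B n (fun i => KaehlerDifferential.D A B (y i.succ)))
        = wedgeD A B (n+1) (fun i => KaehlerDifferential.D A B (y i))) :
    ∀ x ∈ ⨅ j : Fin n, Jt A B n j.val (j.val+1) (by omega) (by have := j.isLt; omega),
      Ψ' (∑ j : Fin (n+2), ((-1 : ℤ) ^ (j : ℕ)) • dbar j x) = dR (Ψ x) := by
  intro x _
  suffices h : Ψ' ∘ₗ (∑ j : Fin (n+2), ((-1 : ℤ) ^ (j : ℕ)) • dbar j) = dR ∘ₗ Ψ by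
    simpa using LinearMap.congr_fun h x
  refine Cq.linearMap_ext A B fun y => ?_
  simp only [LinearMap.comp_apply, LinearMap.sum_apply, LinearMap.smul_apply,
    map_sum, map_zsmul, hdbar, insN_tprod, hΨ', hΨ, hdR, Fin.eta]
  rw [Fin.sum_univ_succ]
  simp [wedgeD_D_insertNth_succ]
end

section
/- Let A be a commutative ring, B a commutative A-algebra, I = ker(mul : B⊗_A B → B), and C₁ = (B⊗_A B)/I², so that Ω¹_{B/A} ≅ I/I² ⊆ C₁. Let E be a B-module with a connection ∇ : E → E ⊗_B Ω¹_{B/A} over A (i.e., ∇(be) = b∇e + e⊗db). Define θ : E ⊗_B C₁ → E ⊗_B C₁ (where C₁ is a B-module via the second factor for the source identification) by θ(e ⊗ c) = e ⊗ c + ∇e · c, where ∇e · c denotes the image of ∇e in E ⊗_B (I/I²) multiplied by c in E ⊗_B C₁. Then θ(e ⊗ 1) − e ⊗ 1 = ∇e under the identification E ⊗_B Ω¹_{B/A} ≅ E ⊗_B (I/I²), and θ is a well-defined isomorphism of C₁-modules from the base change of E along the second inclusion B → C₁ to the base change of E along the first inclusion B → C₁. -/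
set_option synthInstance.maxHeartbeats 1000000
set_option maxHeartbeats 2000000

open scoped TensorProduct

variable (A B : Type) [CommRing A] [CommRing B] [Algebra A B]

/-- `C₁ = (B ⊗[A] B)/I²`, where `I` is the kernel of multiplication. -/
abbrev Csq : Type := (B ⊗[A] B) ⧸ (KaehlerDifferential.ideal A B ^ 2)

/-- `C₁` viewed as a `B`-algebra through the *second* tensor factor. -/
def CsqR : Type := Csq A B

noncomputable instance : CommRing (CsqR A B) := inferInstanceAs (CommRing (Csq A B))

/-- The second-factor `B`-algebra structure on `C₁`. -/
noncomputable instance : Algebra B (CsqR A B) :=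
  ((Ideal.Quotient.mk (KaehlerDifferential.ideal A B ^ 2)).comp
    (Algebra.TensorProduct.includeRight (R := A) (A := B) (B := B)).toRingHom).toAlgebra


variable (E : Type) [AddCommGroup E] [Module B E]

noncomputable instance : Module (Csq A B) (CsqR A B ⊗[B] E) :=
  inferInstanceAs (Module (CsqR A B) (CsqR A B ⊗[B] E))

section Aux

/-- identity map `CsqR → Csq` -/
def toC : CsqR A B → Csq A B := fun c => c

/-- identity map `Csq → CsqR` -/
def toCR : Csq A B → CsqR A B := fun c => c

lemma aux_mul_zero (x y : B ⊗[A] B) (hx : x ∈ KaehlerDifferential.ideal A B)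
    (hy : y ∈ KaehlerDifferential.ideal A B) :
    Ideal.Quotient.mk (KaehlerDifferential.ideal A B ^ 2) x *
      Ideal.Quotient.mk (KaehlerDifferential.ideal A B ^ 2) y = 0 := by
  rw [← map_mul, Ideal.Quotient.eq_zero_iff_mem, pow_two]
  exact Ideal.mul_mem_mul hx hy

end Aux

/-- Given a connection `∇ : E → E ⊗[B] Ω¹_{B/A}` satisfying the Leibniz
rule, `ι : Ω¹_{B/A} → C₁` the canonical identification of `Ω¹` with `I/I² ⊆ C₁` (sending
`dy` to `[1⊗y − y⊗1]`), and `σ : E ⊗[B] Ω¹ → C₁ ⊗[B] E` given by `σ(e ⊗ ω) = ι(ω) ⊗ e`,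
there is an isomorphism `θ` of `C₁`-modules from the base change of `E` along the second
inclusion `B → C₁` to the base change along the first, such that
`θ(1 ⊗ e) = 1 ⊗ e + σ(∇e)`; in particular `θ(e ⊗ 1) − e ⊗ 1 = ∇e` under the
identification `Ω¹_{B/A} ≅ I/I²`. -/
theorem statement18 (nabla : E →+ E ⊗[B] Ω[B⁄A])
    (leibniz : ∀ (b : B) (e : E),
      nabla (b • e) = b • nabla e + e ⊗ₜ[B] KaehlerDifferential.D A B b)
    (iota : Ω[B⁄A] →ₗ[B] Csq A B)
    (hiota : ∀ y : B,
      iota (KaehlerDifferential.D A B y)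
        = Ideal.Quotient.mk (KaehlerDifferential.ideal A B ^ 2)
            (1 ⊗ₜ[A] y - y ⊗ₜ[A] 1))
    (sigma : E ⊗[B] Ω[B⁄A] →ₗ[B] Csq A B ⊗[B] E)
    (hsigma : ∀ (e : E) (om : Ω[B⁄A]), sigma (e ⊗ₜ[B] om) = iota om ⊗ₜ[B] e) :
    ∃ theta : (CsqR A B ⊗[B] E) ≃ₗ[Csq A B] (Csq A B ⊗[B] E),
      ∀ e : E, theta ((1 : CsqR A B) ⊗ₜ[B] e) = (1 : Csq A B) ⊗ₜ[B] e + sigma (nabla e) := by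
  classical
  set Q : B ⊗[A] B →+* Csq A B := Ideal.Quotient.mk (KaehlerDifferential.ideal A B ^ 2) with hQ
  -- iota of a derivation times iota of anything is zero
  have hspan : ∀ om : Ω[B⁄A],
      om ∈ Submodule.span B (Set.range (KaehlerDifferential.D A B)) := by
    intro om
    rw [KaehlerDifferential.span_range_derivation]; trivial
  have smul_iota : ∀ (b : B) (om : Ω[B⁄A]), iota (b • om) = Q (b ⊗ₜ[A] 1) * iota om := by
    intro b om
    rw [map_smul]
    exact Algebra.smul_def b (iota om)
  have step1 : ∀ (y : B) (om : Ω[B⁄A]),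
      iota (KaehlerDifferential.D A B y) * iota om = 0 := by
    intro y om
    induction hspan om using Submodule.span_induction with
    | mem x hx =>
        obtain ⟨y', rfl⟩ := hx
        rw [hiota, hiota]
        exact aux_mul_zero A B _ _
          (KaehlerDifferential.one_smul_sub_smul_one_mem_ideal A y)
          (KaehlerDifferential.one_smul_sub_smul_one_mem_ideal A y')
    | zero => rw [map_zero, mul_zero]
    | add x y' _ _ ih1 ih2 => rw [map_add, mul_add, ih1, ih2, add_zero]
    | smul b x _ ih => rw [smul_iota, mul_left_comm, ih, mul_zero]
  have key0 : ∀ (om om' : Ω[B⁄A]), iota om * iota om' = 0 := by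
    intro om om'
    induction hspan om using Submodule.span_induction with
    | mem x hx => obtain ⟨y, rfl⟩ := hx; exact step1 y om'
    | zero => rw [map_zero, zero_mul]
    | add x y' _ _ ih1 ih2 => rw [map_add, add_mul, ih1, ih2, add_zero]
    | smul b x _ ih => rw [smul_iota, mul_assoc, ih, mul_zero]
  -- the two B-actions agree on the image of iota
  have keysub : ∀ (b : B) (om : Ω[B⁄A]),
      Q (1 ⊗ₜ[A] b) * iota om = Q (b ⊗ₜ[A] 1) * iota om := by
    intro b om
    have h := key0 (KaehlerDifferential.D A B b) om
    rw [hiota, map_sub, sub_mul, sub_eq_zero] at h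
    exact h

  -- smul lemmas
  have hsm1 : ∀ (r c : Csq A B) (e : E), r • (c ⊗ₜ[B] e) = (r * c) ⊗ₜ[B] e := by
    intro r c e; rw [TensorProduct.smul_tmul', smul_eq_mul]
  have hsm2 : ∀ (r : Csq A B) (c : CsqR A B) (e : E),
      r • (c ⊗ₜ[B] e) = (toCR A B (r * toC A B c)) ⊗ₜ[B] e := by
    intro r c e
    exact TensorProduct.smul_tmul' (R' := CsqR A B) r c e
  have hBC : ∀ (b : B) (c : Csq A B), b • c = Q (b ⊗ₜ[A] 1) * c := by
    intro b c; exact Algebra.smul_def b c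
  have hBCR : ∀ (b : B) (c : Csq A B), b • toCR A B c = toCR A B (Q (1 ⊗ₜ[A] b) * c) := by
    intro b c; exact Algebra.smul_def b (toCR A B c)
  have hBact : ∀ (b : B) (x : Csq A B ⊗[B] E), b • x = Q (b ⊗ₜ[A] 1) • x := by
    intro b x
    induction x using TensorProduct.induction_on with
    | zero => rw [smul_zero, smul_zero]
    | tmul c e => rw [TensorProduct.smul_tmul', hsm1, hBC]
    | add x y ihx ihy => rw [smul_add, smul_add, ihx, ihy]
  have hK1 : ∀ (b : B) (x : E ⊗[B] Ω[B⁄A]),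
      Q (1 ⊗ₜ[A] b) • sigma x = Q (b ⊗ₜ[A] 1) • sigma x := by
    intro b x
    induction x using TensorProduct.induction_on with
    | zero => rw [map_zero, smul_zero, smul_zero]
    | tmul e om => rw [hsigma, hsm1, hsm1, keysub]
    | add x y ihx ihy => rw [map_add, smul_add, smul_add, ihx, ihy]
  -- the forward map
  set X : E → Csq A B ⊗[B] E := fun e => (1 : Csq A B) ⊗ₜ[B] e + sigma (nabla e) with hX
  have hXadd : ∀ e₁ e₂, X (e₁ + e₂) = X e₁ + X e₂ := by
    intro e₁ e₂
    simp only [hX, TensorProduct.tmul_add, map_add]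
    abel
  have hX0 : X 0 = 0 := by
    simp only [hX, TensorProduct.tmul_zero, map_zero, add_zero]
  have hXsmul : ∀ (b : B) (e : E),
      Q (1 ⊗ₜ[A] b) • X e = X (b • e) := by
    intro b e
    have h1 : X (b • e) = b • X e + (Q (1 ⊗ₜ[A] b) - Q (b ⊗ₜ[A] 1)) ⊗ₜ[B] e := by
      simp only [hX, leibniz, map_add, map_smul, hsigma, hiota, map_sub]
      rw [TensorProduct.tmul_smul, smul_add]
      abel
    rw [h1, hBact]
    simp only [hX, smul_add]
    rw [hK1, hsm1, hsm1, mul_one, mul_one, TensorProduct.sub_tmul]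
    abel
  let g : CsqR A B →+ E →+ (Csq A B ⊗[B] E) :=
    { toFun := fun c =>
        { toFun := fun e => toC A B c • X e
          map_zero' := by show toC A B c • X 0 = 0; rw [hX0, smul_zero]
          map_add' := fun e₁ e₂ => by
            show toC A B c • X (e₁ + e₂) = toC A B c • X e₁ + toC A B c • X e₂
            rw [hXadd, smul_add] }
      map_zero' := AddMonoidHom.ext fun e => by
        show toC A B 0 • X e = 0
        rw [show toC A B 0 = 0 from rfl]
        exact zero_smul (Csq A B) (X e)
      map_add' := fun c₁ c₂ => AddMonoidHom.ext fun e => by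
        show toC A B (c₁ + c₂) • X e = toC A B c₁ • X e + toC A B c₂ • X e
        rw [show toC A B (c₁ + c₂) = toC A B c₁ + toC A B c₂ from rfl]
        exact add_smul (toC A B c₁) (toC A B c₂) (X e)
    }
  have hg : ∀ (b : B) (c : CsqR A B) (e : E), g (b • c) e = g c (b • e) := by
    intro b c e
    show toC A B (b • c) • X e = toC A B c • X (b • e)
    rw [show toC A B (b • c) = Q (1 ⊗ₜ[A] b) * toC A B c from Algebra.smul_def b c,
      mul_comm, mul_smul, hXsmul]
  let F₀ : (CsqR A B ⊗[B] E) →+ (Csq A B ⊗[B] E) := TensorProduct.liftAddHom g hg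
  have hF₀ : ∀ (c : CsqR A B) (e : E), F₀ (c ⊗ₜ[B] e) = toC A B c • X e := fun c e => rfl
  let F : (CsqR A B ⊗[B] E) →ₗ[Csq A B] (Csq A B ⊗[B] E) :=
    { toFun := F₀
      map_add' := F₀.map_add
      map_smul' := by
        intro r x
        simp only [RingHom.id_apply]
        induction x using TensorProduct.induction_on with
        | zero => rw [smul_zero, map_zero, smul_zero]
        | tmul c e =>
            rw [hsm2, hF₀, hF₀]
            show (r * toC A B c) • X e = r • (toC A B c • X e)
            rw [mul_smul]
        | add x y ihx ihy => rw [smul_add, map_add, map_add, ihx, ihy, smul_add] }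

  -- the backward map
  let t : E →+ Ω[B⁄A] →+ (CsqR A B ⊗[B] E) :=
    { toFun := fun e =>
        { toFun := fun om => toCR A B (iota om) ⊗ₜ[B] e
          map_zero' := by
            show toCR A B (iota 0) ⊗ₜ[B] e = 0
            rw [map_zero]
            exact TensorProduct.zero_tmul _ e
          map_add' := fun om₁ om₂ => by
            show toCR A B (iota (om₁ + om₂)) ⊗ₜ[B] e = _
            rw [map_add]
            exact TensorProduct.add_tmul (toCR A B (iota om₁)) (toCR A B (iota om₂)) e }
      map_zero' := AddMonoidHom.ext fun om => by
        show toCR A B (iota om) ⊗ₜ[B] (0 : E) = 0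
        exact TensorProduct.tmul_zero _ _
      map_add' := fun e₁ e₂ => AddMonoidHom.ext fun om => by
        show toCR A B (iota om) ⊗ₜ[B] (e₁ + e₂)
            = toCR A B (iota om) ⊗ₜ[B] e₁ + toCR A B (iota om) ⊗ₜ[B] e₂
        exact TensorProduct.tmul_add _ e₁ e₂ }
  have ht : ∀ (b : B) (e : E) (om : Ω[B⁄A]), t (b • e) om = t e (b • om) := by
    intro b e om
    show toCR A B (iota om) ⊗ₜ[B] (b • e) = toCR A B (iota (b • om)) ⊗ₜ[B] e
    rw [smul_iota, ← keysub, ← TensorProduct.smul_tmul, hBCR]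
  let T₀ : (E ⊗[B] Ω[B⁄A]) →+ (CsqR A B ⊗[B] E) := TensorProduct.liftAddHom t ht
  have hT₀ : ∀ (e : E) (om : Ω[B⁄A]), T₀ (e ⊗ₜ[B] om) = toCR A B (iota om) ⊗ₜ[B] e :=
    fun e om => rfl
  have hTsmul : ∀ (b : B) (x : E ⊗[B] Ω[B⁄A]), T₀ (b • x) = Q (1 ⊗ₜ[A] b) • T₀ x := by
    intro b x
    induction x using TensorProduct.induction_on with
    | zero => rw [smul_zero, map_zero, smul_zero]
    | tmul e om =>
        rw [TensorProduct.smul_tmul', hT₀, hT₀, hsm2, ← TensorProduct.smul_tmul, hBCR]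
        rfl
    | add x y ihx ihy => rw [smul_add, map_add, map_add, ihx, ihy, smul_add]
  have hTkeysub : ∀ (b : B) (x : E ⊗[B] Ω[B⁄A]),
      Q (1 ⊗ₜ[A] b) • T₀ x = Q (b ⊗ₜ[A] 1) • T₀ x := by
    intro b x
    induction x using TensorProduct.induction_on with
    | zero => rw [map_zero, smul_zero, smul_zero]
    | tmul e om =>
        rw [hT₀, hsm2, hsm2]
        show toCR A B (Q (1 ⊗ₜ[A] b) * iota om) ⊗ₜ[B] e
            = toCR A B (Q (b ⊗ₜ[A] 1) * iota om) ⊗ₜ[B] e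
        rw [keysub]
    | add x y ihx ihy => rw [map_add, smul_add, smul_add, ihx, ihy]
  set Y : E → CsqR A B ⊗[B] E := fun e => (1 : CsqR A B) ⊗ₜ[B] e - T₀ (nabla e) with hY
  have hYadd : ∀ e₁ e₂, Y (e₁ + e₂) = Y e₁ + Y e₂ := by
    intro e₁ e₂
    simp only [hY, TensorProduct.tmul_add, map_add]
    abel
  have hY0 : Y 0 = 0 := by
    simp only [hY, TensorProduct.tmul_zero, map_zero, sub_zero]
  have hYsmul : ∀ (b : B) (e : E), Q (b ⊗ₜ[A] 1) • Y e = Y (b • e) := by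
    intro b e
    have h2 : T₀ (nabla (b • e)) = Q (1 ⊗ₜ[A] b) • T₀ (nabla e)
        + (toCR A B (Q (1 ⊗ₜ[A] b)) ⊗ₜ[B] e - toCR A B (Q (b ⊗ₜ[A] 1)) ⊗ₜ[B] e) := by
      rw [leibniz, map_add, hTsmul, hT₀]
      congr 1
      rw [hiota, map_sub]
      exact TensorProduct.sub_tmul _ _ _
    have h3 : (1 : CsqR A B) ⊗ₜ[B] (b • e) = toCR A B (Q (1 ⊗ₜ[A] b)) ⊗ₜ[B] e := by
      rw [← TensorProduct.smul_tmul]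
      show (b • toCR A B 1) ⊗ₜ[B] e = _
      rw [hBCR, mul_one]
    have h4 : Q (b ⊗ₜ[A] 1) • ((1 : CsqR A B) ⊗ₜ[B] e) = toCR A B (Q (b ⊗ₜ[A] 1)) ⊗ₜ[B] e := by
      rw [hsm2]
      show toCR A B (Q (b ⊗ₜ[A] 1) * 1) ⊗ₜ[B] e = _
      rw [mul_one]
    show Q (b ⊗ₜ[A] 1) • ((1 : CsqR A B) ⊗ₜ[B] e - T₀ (nabla e))
        = (1 : CsqR A B) ⊗ₜ[B] (b • e) - T₀ (nabla (b • e))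
    rw [h3, h2, smul_sub, ← hTkeysub, h4]
    abel
  let g' : Csq A B →+ E →+ (CsqR A B ⊗[B] E) :=
    { toFun := fun c =>
        { toFun := fun e => c • Y e
          map_zero' := by show c • Y 0 = 0; rw [hY0, smul_zero]
          map_add' := fun e₁ e₂ => by
            show c • Y (e₁ + e₂) = c • Y e₁ + c • Y e₂
            rw [hYadd, smul_add] }
      map_zero' := AddMonoidHom.ext fun e => by
        show (0 : Csq A B) • Y e = 0
        exact zero_smul (Csq A B) (Y e)
      map_add' := fun c₁ c₂ => AddMonoidHom.ext fun e => by
        show (c₁ + c₂) • Y e = c₁ • Y e + c₂ • Y e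
        exact add_smul c₁ c₂ (Y e) }
  have hg' : ∀ (b : B) (c : Csq A B) (e : E), g' (b • c) e = g' c (b • e) := by
    intro b c e
    show (b • c) • Y e = c • Y (b • e)
    rw [hBC, mul_comm, mul_smul, hYsmul]
  let G₀ : (Csq A B ⊗[B] E) →+ (CsqR A B ⊗[B] E) := TensorProduct.liftAddHom g' hg'
  have hG₀ : ∀ (c : Csq A B) (e : E), G₀ (c ⊗ₜ[B] e) = c • Y e := fun c e => rfl
  let G : (Csq A B ⊗[B] E) →ₗ[Csq A B] (CsqR A B ⊗[B] E) :=
    { toFun := G₀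
      map_add' := G₀.map_add
      map_smul' := by
        intro r x
        simp only [RingHom.id_apply]
        induction x using TensorProduct.induction_on with
        | zero => rw [smul_zero, map_zero, smul_zero]
        | tmul c e => rw [hsm1, hG₀, hG₀, mul_smul]
        | add x y ihx ihy => rw [smul_add, map_add, map_add, ihx, ihy, smul_add] }
  -- composite lemmas
  have hiotasigma : ∀ (om : Ω[B⁄A]) (x : E ⊗[B] Ω[B⁄A]), iota om • sigma x = 0 := by
    intro om x
    induction x using TensorProduct.induction_on with
    | zero => rw [map_zero, smul_zero]
    | tmul e' om' =>
        rw [hsigma, hsm1, key0]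
        exact TensorProduct.zero_tmul _ _
    | add x y ihx ihy => rw [map_add, smul_add, ihx, ihy, add_zero]
  have hiotaT : ∀ (om : Ω[B⁄A]) (x : E ⊗[B] Ω[B⁄A]), iota om • T₀ x = 0 := by
    intro om x
    induction x using TensorProduct.induction_on with
    | zero => rw [map_zero, smul_zero]
    | tmul e' om' =>
        rw [hT₀, hsm2]
        show toCR A B (iota om * iota om') ⊗ₜ[B] e' = 0
        rw [key0]
        exact TensorProduct.zero_tmul _ _
    | add x y ihx ihy => rw [map_add, smul_add, ihx, ihy, add_zero]
  have hFT : ∀ x : E ⊗[B] Ω[B⁄A], F₀ (T₀ x) = sigma x := by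
    intro x
    induction x using TensorProduct.induction_on with
    | zero => rw [map_zero, map_zero, map_zero]
    | tmul e om =>
        rw [hT₀, hF₀, hsigma]
        show iota om • ((1 : Csq A B) ⊗ₜ[B] e + sigma (nabla e)) = iota om ⊗ₜ[B] e
        rw [smul_add, hsm1, mul_one, hiotasigma, add_zero]
    | add x y ihx ihy => rw [map_add, map_add, map_add, ihx, ihy]
  have hGS : ∀ x : E ⊗[B] Ω[B⁄A], G₀ (sigma x) = T₀ x := by
    intro x
    induction x using TensorProduct.induction_on with
    | zero => rw [map_zero, map_zero, map_zero]
    | tmul e om =>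
        rw [hsigma, hG₀, hT₀]
        show iota om • ((1 : CsqR A B) ⊗ₜ[B] e - T₀ (nabla e)) = toCR A B (iota om) ⊗ₜ[B] e
        rw [smul_sub, hiotaT, sub_zero, hsm2]
        show toCR A B (iota om * 1) ⊗ₜ[B] e = toCR A B (iota om) ⊗ₜ[B] e
        rw [mul_one]
    | add x y ihx ihy => rw [map_add, map_add, map_add, ihx, ihy]
  have hGF : ∀ z : CsqR A B ⊗[B] E, G (F z) = z := by
    intro z
    induction z using TensorProduct.induction_on with
    | zero => rw [map_zero, map_zero]
    | tmul c e =>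
        rw [show F (c ⊗ₜ[B] e) = toC A B c • X e from rfl, map_smul]
        have hGX : G (X e) = (1 : CsqR A B) ⊗ₜ[B] e := by
          show G ((1 : Csq A B) ⊗ₜ[B] e + sigma (nabla e)) = _
          rw [map_add, show G ((1 : Csq A B) ⊗ₜ[B] e) = (1 : Csq A B) • Y e from rfl,
            one_smul, show G (sigma (nabla e)) = G₀ (sigma (nabla e)) from rfl, hGS]
          show (1 : CsqR A B) ⊗ₜ[B] e - T₀ (nabla e) + T₀ (nabla e) = _
          abel
        rw [hGX, hsm2]
        show toCR A B (toC A B c * 1) ⊗ₜ[B] e = c ⊗ₜ[B] e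
        rw [mul_one]
        rfl
    | add x y ihx ihy => rw [map_add, map_add, ihx, ihy]
  have hFG : ∀ z : Csq A B ⊗[B] E, F (G z) = z := by
    intro z
    induction z using TensorProduct.induction_on with
    | zero => rw [map_zero, map_zero]
    | tmul c e =>
        rw [show G (c ⊗ₜ[B] e) = c • Y e from rfl, map_smul]
        have hFY : F (Y e) = (1 : Csq A B) ⊗ₜ[B] e := by
          show F ((1 : CsqR A B) ⊗ₜ[B] e - T₀ (nabla e)) = _
          rw [map_sub, show F ((1 : CsqR A B) ⊗ₜ[B] e) = toC A B 1 • X e from rfl,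
            show toC A B (1 : CsqR A B) = 1 from rfl, one_smul,
            show F (T₀ (nabla e)) = F₀ (T₀ (nabla e)) from rfl, hFT]
          show (1 : Csq A B) ⊗ₜ[B] e + sigma (nabla e) - sigma (nabla e) = _
          abel
        rw [hFY, hsm1, mul_one]
    | add x y ihx ihy => rw [map_add, map_add, ihx, ihy]
  refine ⟨LinearEquiv.ofLinear F G (LinearMap.ext fun z => hFG z) (LinearMap.ext fun z => hGF z),
    fun e => ?_⟩
  rw [LinearEquiv.ofLinear_apply,
    show F ((1 : CsqR A B) ⊗ₜ[B] e) = toC A B 1 • X e from rfl,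
    show toC A B (1 : CsqR A B) = 1 from rfl, one_smul]
end
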